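/- If x^(l) → x₀ in τ, y^(l) → y^δ in σ, F^(l) → F^δ in the d_{K,L}-sense with F^δ ∈ F(τ), the R_k are τ-lower semi-continuous, and α^(l) → α in ℝⁿ≥0, then T(x₀; α, y^δ, F^δ) ≤ liminf_l T(x^(l); α^(l), y^(l), F^(l)). -/

import Mathlib

open Filter Topology
open scoped ENNReal

/-- Convergence of a sequence in `Y` with respect to the topology `σ` induced by the
pseudo-metrics `d^(z)(y,ỹ) = |S(z,y) − S(z,ỹ)|`: `y^(l) → p` iff `S(z, y^(l)) → S(z,p)`
for every `z ∈ Y`. -/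
def SigmaTendsto {Y : Type*} (S : Y → Y → ℝ) (y : ℕ → Y) (p : Y) : Prop :=
  ∀ z : Y, Tendsto (fun l => S z (y l)) atTop (nhds (S z p))

/-- Sequential compactness of a subset of `Y` with respect to the topology `σ`. -/
def SeqCompactSigma {Y : Type*} (S : Y → Y → ℝ) (L : Set Y) : Prop :=
  ∀ y : ℕ → Y, (∀ l, y l ∈ L) →
    ∃ p ∈ L, ∃ φ : ℕ → ℕ, StrictMono φ ∧ SigmaTendsto S (fun l => y (φ l)) p

/-- Sequential lower semi-continuity of `(x,y) ↦ S(F(x),y)` with respect to `τ × σ`. -/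
def SeqLSCop {X Y : Type*} [TopologicalSpace X] (S : Y → Y → ℝ) (F : X → Y) : Prop :=
  ∀ (x : ℕ → X) (x₀ : X) (y : ℕ → Y) (y₀ : Y),
    Tendsto x atTop (nhds x₀) → SigmaTendsto S y y₀ →
      S (F x₀) y₀ ≤ liminf (fun l => S (F (x l)) (y l)) atTop

/-- The pseudo-metric `d_{K,L}(F,G) = sup {|S(F(x),z) − S(G(x),z)| : x ∈ K, z ∈ L}`
(with values in `[0,∞]`). -/
noncomputable def dKL {X Y : Type*} (S : Y → Y → ℝ) (K : Set X) (L : Set Y)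
    (F G : X → Y) : ℝ≥0∞ :=
  ⨆ x ∈ K, ⨆ z ∈ L, ENNReal.ofReal |S (F x) z - S (G x) z|

/-- Convergence of operators `F^(l) → F` with respect to `τ`: `d_{K,L}(F^(l),F) → 0`
for every sequentially `τ`-compact `K ⊆ X` and sequentially `σ`-compact `L ⊆ Y`. -/
def OpTendsto {X Y : Type*} [TopologicalSpace X] (S : Y → Y → ℝ)
    (F' : ℕ → X → Y) (F : X → Y) : Prop :=
  ∀ (K : Set X) (L : Set Y), IsSeqCompact K → SeqCompactSigma S L →
    Tendsto (fun l => dKL S K L (F' l) F) atTop (nhds 0)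
/-- Sequential `τ`-coercivity: every sequence on which `R` is (finitely) bounded has a
`τ`-convergent subsequence. -/
def SeqCoercive {X : Type*} [TopologicalSpace X] (R : X → ℝ≥0∞) : Prop :=
  ∀ (u : ℕ → X) (c : ℝ≥0∞), c ≠ ⊤ → (∀ l, R (u l) ≤ c) →
    ∃ (x : X) (φ : ℕ → ℕ), StrictMono φ ∧ Tendsto (fun l => u (φ l)) atTop (nhds x)

/-- Sequential `τ`-lower semi-continuity of `R : X → [0,∞]`. -/
def SeqLSC {X : Type*} [TopologicalSpace X] (R : X → ℝ≥0∞) : Prop :=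
  ∀ (u : ℕ → X) (x : X), Tendsto u atTop (nhds x) →
    R x ≤ liminf (fun l => R (u l)) atTop

/-- The class `F(τ)`: `(x,y) ↦ S(F(x),y)` is sequentially `(τ×σ)`-lower semi-continuous and
the joint domain `D` of the regularisation terms is dense in the required sense. -/
def MemFtau {X Y : Type*} [TopologicalSpace X] {n : ℕ} (S : Y → Y → ℝ)
    (R : Fin n → X → ℝ≥0∞) (F : X → Y) : Prop :=
  SeqLSCop S F ∧
  ∀ (x : X) (y : Y), ∃ u : ℕ → X,
    (∀ l k, R k (u l) ≠ ⊤) ∧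
    Tendsto u atTop (nhds x) ∧
    (∀ k, Tendsto (fun l => R k (u l)) atTop (nhds (R k x))) ∧
    Tendsto (fun l => S (F (u l)) y) atTop (nhds (S (F x) y))

/-- The multi-parameter Tikhonov functional
`T(x; α, y, F) = S(F(x),y) + Σ_k α_k R_k(x)`, with the convention `α_k R_k(x) = 0` when
`α_k = 0` and `R_k(x) = ∞`. -/
noncomputable def Tik {X Y : Type*} {n : ℕ} (S : Y → Y → ℝ) (R : Fin n → X → ℝ≥0∞)
    (α : Fin n → ℝ) (y : Y) (F : X → Y) (x : X) : ℝ≥0∞ :=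
  ENNReal.ofReal (S (F x) y) + ∑ k, ENNReal.ofReal (α k) * R k x

/-!
On `K = {x₀} ∪ {x^(l)}` and `L = {y^δ} ∪ {y^(l)}`, which are sequentially compact because a
convergent sequence together with its limit always is, the definition of `d_{K,L}` gives
`S(F^δ(x^(l)), y^(l)) ≤ d_{K,L}(F^(l), F^δ) + S(F^(l)(x^(l)), y^(l))` with the first summand
tending to `0`. Hence the lower semi-continuity of the data term of `F^δ` passes to the data terms
of the `F^(l)`. Each penalty term is the product of a convergent factor `α_k^(l)` and a lower
semi-continuous factor `R_k(x^(l))`, and `liminf` is superadditive on `[0, ∞]`.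
-/

abbrev sigmaTopology {Y : Type*} (S : Y → Y → ℝ) : TopologicalSpace Y :=
  ⨅ z, TopologicalSpace.induced (S z) inferInstance

section SigmaTopology

variable {Y : Type*} {S : Y → Y → ℝ}

theorem sigmaTendsto_iff_tendsto {y : ℕ → Y} {p : Y} :
    SigmaTendsto S y p ↔ Tendsto y atTop (@nhds Y (sigmaTopology S) p) := by
  rw [nhds_iInf]
  simp only [SigmaTendsto, nhds_induced, tendsto_iInf, tendsto_comap_iff]
  rfl

theorem seqCompactSigma_iff_isSeqCompact {L : Set Y} :
    SeqCompactSigma S L ↔ @IsSeqCompact Y (sigmaTopology S) L := by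
  simp only [SeqCompactSigma, IsSeqCompact, sigmaTendsto_iff_tendsto]
  rfl

end SigmaTopology

theorem Filter.Tendsto.isSeqCompact_insert_range {X : Type*} [TopologicalSpace X]
    {x : ℕ → X} {a : X} (hx : Tendsto x atTop (𝓝 a)) : IsSeqCompact (insert a (Set.range x)) := by
  have hcont : Continuous fun p : OnePoint ℕ => p.elim a x :=
    (OnePoint.continuous_iff_from_nat _).2 hx
  have hrange : Set.range (fun p : OnePoint ℕ => p.elim a x) = insert a (Set.range x) := by
    rw [← Option.range_elim]
    rfl
  exact hrange ▸ IsSeqCompact.range hcont.seqContinuous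

theorem SigmaTendsto.seqCompactSigma_insert_range {Y : Type*} {S : Y → Y → ℝ} {y : ℕ → Y}
    {p : Y} (hy : SigmaTendsto S y p) : SeqCompactSigma S (insert p (Set.range y)) :=
  letI := sigmaTopology S
  seqCompactSigma_iff_isSeqCompact.2 (sigmaTendsto_iff_tendsto.1 hy).isSeqCompact_insert_range

namespace ENNReal

variable {ι : Type*} {f : Filter ι}

theorem ofReal_liminf_le_liminf_ofReal (u : ι → ℝ) :
    ENNReal.ofReal (liminf u f) ≤ liminf (fun i => ENNReal.ofReal (u i)) f := by
  by_cases hu : IsBoundedUnder (· ≥ ·) f u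
  · refine (le_liminf_iff (by isBoundedDefault) (by isBoundedDefault)).2 fun c hc => ?_
    have hc_top : c ≠ ⊤ := hc.ne_top
    filter_upwards [eventually_lt_of_lt_liminf ((lt_ofReal_iff_toReal_lt hc_top).1 hc) hu]
      with i hi using (lt_ofReal_iff_toReal_lt hc_top).2 hi
  · -- the real `liminf` of a sequence that is not bounded below is the junk value `0`
    simp [Real.liminf_of_not_isBoundedUnder hu]

theorem liminf_add_liminf_le_liminf_add (u v : ι → ℝ≥0∞) :
    liminf u f + liminf v f ≤ liminf (u + v) f := by
  refine (le_liminf_iff (by isBoundedDefault) (by isBoundedDefault)).2 fun c hc => ?_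
  rcases eq_or_ne (liminf u f) 0 with hu | hu
  · rw [hu, zero_add] at hc
    filter_upwards [eventually_lt_of_lt_liminf hc] with i hi using hi.trans_le le_add_self
  rcases eq_or_ne (liminf v f) 0 with hv | hv
  · rw [hv, add_zero] at hc
    filter_upwards [eventually_lt_of_lt_liminf hc] with i hi using hi.trans_le le_self_add
  obtain ⟨a, ha, b, hb, hab⟩ := exists_lt_add_of_lt_add hc hu hv
  filter_upwards [eventually_lt_of_lt_liminf ha, eventually_lt_of_lt_liminf hb] with i hai hbi
  exact hab.trans (ENNReal.add_lt_add hai hbi)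

theorem sum_liminf_le_liminf_sum {κ : Type*} (s : Finset κ) (u : κ → ι → ℝ≥0∞) :
    ∑ k ∈ s, liminf (u k) f ≤ liminf (fun i => ∑ k ∈ s, u k i) f := by
  classical
  induction s using Finset.induction with
  | empty => simp
  | insert k s hk ih =>
    simp only [Finset.sum_insert hk]
    exact (add_le_add_right ih _).trans (liminf_add_liminf_le_liminf_add _ _)

end ENNReal

theorem ofReal_le_dKL_add {X Y : Type*} {S : Y → Y → ℝ} {K : Set X} {L : Set Y}
    (F G : X → Y) {x : X} {z : Y} (hx : x ∈ K) (hz : z ∈ L) :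
    ENNReal.ofReal (S (G x) z) ≤ dKL S K L F G + ENNReal.ofReal (S (F x) z) := by
  have hdist : ENNReal.ofReal |S (F x) z - S (G x) z| ≤ dKL S K L F G :=
    le_iSup₂_of_le (f := fun x _ => ⨆ z ∈ L, ENNReal.ofReal |S (F x) z - S (G x) z|) x hx
      (le_iSup₂ (f := fun z _ => ENNReal.ofReal |S (F x) z - S (G x) z|) z hz)
  calc ENNReal.ofReal (S (G x) z)
      ≤ ENNReal.ofReal (|S (F x) z - S (G x) z| + S (F x) z) :=
        ENNReal.ofReal_le_ofReal (by linarith [neg_abs_le (S (F x) z - S (G x) z)])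
    _ ≤ ENNReal.ofReal |S (F x) z - S (G x) z| + ENNReal.ofReal (S (F x) z) :=
        ENNReal.ofReal_add_le
    _ ≤ dKL S K L F G + ENNReal.ofReal (S (F x) z) := add_le_add_left hdist _

section Tikhonov

variable {X Y : Type*} [TopologicalSpace X] {S : Y → Y → ℝ}

theorem ofReal_le_liminf_of_opTendsto {Fδ : X → Y} {F' : ℕ → X → Y} {x' : ℕ → X} {x₀ : X}
    {y' : ℕ → Y} {yδ : Y} (hFδ : SeqLSCop S Fδ) (hop : OpTendsto S F' Fδ)
    (hx : Tendsto x' atTop (𝓝 x₀)) (hy : SigmaTendsto S y' yδ) :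
    ENNReal.ofReal (S (Fδ x₀) yδ) ≤
      liminf (fun l => ENNReal.ofReal (S (F' l (x' l)) (y' l))) atTop := by
  set K := insert x₀ (Set.range x')
  set L := insert yδ (Set.range y')
  have hd : Tendsto (fun l => dKL S K L (F' l) Fδ) atTop (𝓝 0) :=
    hop K L hx.isSeqCompact_insert_range hy.seqCompactSigma_insert_range
  calc ENNReal.ofReal (S (Fδ x₀) yδ)
      ≤ ENNReal.ofReal (liminf (fun l => S (Fδ (x' l)) (y' l)) atTop) :=
        ENNReal.ofReal_le_ofReal (hFδ x' x₀ y' yδ hx hy)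
    _ ≤ liminf (fun l => ENNReal.ofReal (S (Fδ (x' l)) (y' l))) atTop :=
        ENNReal.ofReal_liminf_le_liminf_ofReal _
    _ ≤ liminf ((fun l => dKL S K L (F' l) Fδ) +
          fun l => ENNReal.ofReal (S (F' l (x' l)) (y' l))) atTop :=
        liminf_le_liminf (.of_forall fun l =>
          ofReal_le_dKL_add _ _ (Set.mem_insert_of_mem _ ⟨l, rfl⟩)
            (Set.mem_insert_of_mem _ ⟨l, rfl⟩))
    _ = liminf (fun l => ENNReal.ofReal (S (F' l (x' l)) (y' l))) atTop :=
        ENNReal.liminf_add_of_left_tendsto_zero hd _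

theorem ofReal_mul_le_liminf_of_seqLSC {R : X → ℝ≥0∞} (hR : SeqLSC R) {a' : ℕ → ℝ} {a : ℝ}
    (ha : Tendsto a' atTop (𝓝 a)) {x' : ℕ → X} {x₀ : X} (hx : Tendsto x' atTop (𝓝 x₀)) :
    ENNReal.ofReal a * R x₀ ≤ liminf (fun l => ENNReal.ofReal (a' l) * R (x' l)) atTop := by
  have hliminf : liminf (fun l => ENNReal.ofReal (a' l)) atTop = ENNReal.ofReal a :=
    ((ENNReal.continuous_ofReal.tendsto a).comp ha).liminf_eq
  calc ENNReal.ofReal a * R x₀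
      ≤ liminf (fun l => ENNReal.ofReal (a' l)) atTop * liminf (fun l => R (x' l)) atTop := by
        rw [hliminf]
        exact mul_le_mul_right (hR x' x₀ hx) _
    _ ≤ _ := ENNReal.le_liminf_mul

end Tikhonov

theorem tikhonov_lsc_general {X Y : Type*} [TopologicalSpace X] {n : ℕ}
    (S : Y → Y → ℝ)
    (R : Fin n → X → ℝ≥0∞) (hlsc : ∀ k, SeqLSC (R k))
    (yδ : Y) (y' : ℕ → Y) (hy : SigmaTendsto S y' yδ)
    (Fδ : X → Y) (F' : ℕ → X → Y) (hFδlsc : SeqLSCop S Fδ) (hop : OpTendsto S F' Fδ)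
    (α : Fin n → ℝ)
    (α' : ℕ → Fin n → ℝ)
    (hαconv : ∀ k, Tendsto (fun l => α' l k) atTop (nhds (α k)))
    (x' : ℕ → X) (x₀ : X) (hx : Tendsto x' atTop (nhds x₀)) :
    Tik S R α yδ Fδ x₀ ≤ liminf (fun l => Tik S R (α' l) (y' l) (F' l) (x' l)) atTop := by
  have hdata := ofReal_le_liminf_of_opTendsto hFδlsc hop hx hy
  have hreg : ∑ k, ENNReal.ofReal (α k) * R k x₀ ≤
      liminf (fun l => ∑ k, ENNReal.ofReal (α' l k) * R k (x' l)) atTop :=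
    (Finset.sum_le_sum fun k _ => ofReal_mul_le_liminf_of_seqLSC (hlsc k) (hαconv k) hx).trans
      (ENNReal.sum_liminf_le_liminf_sum _ _)
  exact (add_le_add hdata hreg).trans (ENNReal.liminf_add_liminf_le_liminf_add _ _)

/-- joint sequential lower semi-continuity of the Tikhonov functional: if
`x^(l) → x₀` in `τ`, `y^(l) → y^δ` in `σ`, `F^(l) → F^δ` in the `d_{K,L}`-sense with
`F^δ ∈ F(τ)`, the `R_k` are `τ`-lower semi-continuous and `α^(l) → α`, then
`T(x₀; α, y^δ, F^δ) ≤ liminf_l T(x^(l); α^(l), y^(l), F^(l))`. -/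
theorem tikhonov_lsc {X Y : Type*} [TopologicalSpace X] {n : ℕ}
    (S : Y → Y → ℝ) (hS0 : ∀ y z : Y, 0 ≤ S y z) (hSdef : ∀ y z : Y, S y z = 0 ↔ y = z)
    (R : Fin n → X → ℝ≥0∞) (hlsc : ∀ k, SeqLSC (R k))
    (yδ : Y) (y' : ℕ → Y) (hy : SigmaTendsto S y' yδ)
    (Fδ : X → Y) (F' : ℕ → X → Y) (hFδlsc : SeqLSCop S Fδ) (hop : OpTendsto S F' Fδ)
    (α : Fin n → ℝ) (hα : ∀ k, 0 ≤ α k)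
    (α' : ℕ → Fin n → ℝ) (hα' : ∀ l k, 0 ≤ α' l k)
    (hαconv : ∀ k, Tendsto (fun l => α' l k) atTop (nhds (α k)))
    (x' : ℕ → X) (x₀ : X) (hx : Tendsto x' atTop (nhds x₀)) :
    Tik S R α yδ Fδ x₀ ≤ liminf (fun l => Tik S R (α' l) (y' l) (F' l) (x' l)) atTop :=
  tikhonov_lsc_general S R hlsc yδ y' hy Fδ F' hFδlsc hop α α' hαconv x' x₀ hx
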